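/- arXiv:2306.12158 — 2 statements merged into one kernel-verified Lean document; each statement's English description precedes it below -/
import Mathlib

section
/- The map sending a maximal mesa set M ∈ AMS_{3k−1} with |M| = 2k−1 to the lattice path with i-th step north if i ∈ M and east otherwise is a bijection onto the set of (2k−1,k)-Dyck paths (lattice paths from (0,0) to (k,2k−1) staying weakly below the line y = x·(2k−1)/k). -/
/-- `w` (read on positions `1,…,2n`) is a Stirling permutation of order `n`:
each value `1,…,n` appears exactly twice, all letters lie in `[1,n]`, and every
value between the two copies of a value exceeds it. -/
def IsStirling (n : ℕ) (w : ℕ → ℕ) : Prop :=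
  (∀ k, 1 ≤ k → k ≤ n → ((Finset.Icc 1 (2*n)).filter (fun i => w i = k)).card = 2) ∧
  (∀ i, 1 ≤ i → i ≤ 2*n → 1 ≤ w i ∧ w i ≤ n) ∧
  (∀ i j l, 1 ≤ i → i < j → j < l → l ≤ 2*n → w i = w l → w i < w j)

/-- The set of mesas of `w`: values `m` with `w(i-1) < w(i) = w(i+1) = m > w(i+2)`
for some `2 ≤ i ≤ 2n-2`. -/
def MesaSet (n : ℕ) (w : ℕ → ℕ) : Set ℕ :=
  {m | ∃ i, 2 ≤ i ∧ i + 2 ≤ 2*n ∧ w (i-1) < w i ∧ w i = w (i+1) ∧ w (i+2) < w i ∧ w i = m}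

/-- The collection of admissible mesa sets of order `n`. -/
def AMS (n : ℕ) : Set (Set ℕ) := {M | ∃ w, IsStirling n w ∧ MesaSet n w = M}

/-- A subset `S` of `{1,…,3k-1}` encodes a `(2k-1,k)`-Dyck path: the `i`-th step of
the path is north if `i ∈ S` and east otherwise, and after each step the current
lattice point `(a,b)` (with `b` north steps and `a` east steps so far) stays weakly
below the line `y = x·(2k-1)/k`. -/
def IsDyckNorthSet (k : ℕ) (S : Set ℕ) : Prop :=
  S ⊆ Set.Icc 1 (3*k-1) ∧ S.ncard = 2*k - 1 ∧
    ∀ j ≤ 3*k - 1, k * (S ∩ Set.Icc 1 j).ncard ≤ (2*k - 1) * (j - (S ∩ Set.Icc 1 j).ncard)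

/-!
Two mesas of a Stirling permutation start at least three positions apart, so in a word of
length `6k-2` with `2k-1` mesas they start exactly at the positions `3t+2`: the word is
`u₀ m₀ m₀ u₁ m₁ m₁ u₂ ⋯ m_{2k-2} m_{2k-2} u_{2k-1}`. Every letter outside the mesa set `M`
then occupies two valleys `u_r`, and a mesa of height `≤ j` needs both neighbouring valleys below
`j`; counting the valleys below `j` gives `#(M ∩ [1,j]) < 2·#([1,j] \ M)`, which is the Dyck
condition for the slope `(2k-1)/k`. Conversely, for a Dyck set `S` with elements `s₀ < s₁ < ⋯`
and complement `c₀ < c₁ < ⋯` the word `c₀ s₀ s₀ c₀ s₁ s₁ c₁ s₂ s₂ c₁ ⋯` is a Stirling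
permutation with mesa set `S`: the Dyck condition at the north step `s_t` says exactly that
`s_t` exceeds its right neighbour `c_{(t+1)/2}`.
-/

open Finset Nat

namespace Nat

variable {p : ℕ → Prop} [DecidablePred p] {i m : ℕ}

lemma nth_mem_of_lt_count (h : i < count p m) : p (nth p i) :=
  nth_mem i fun hf => h.trans_le (count_le_card hf m)

lemma count_nth_of_lt_count (h : i < count p m) : count p (nth p i) = i :=
  count_nth fun hf => h.trans_le (count_le_card hf m)

lemma nth_eq_iff_eq_count {x : ℕ} (h : i < count p m) (hx : p x) :
    nth p i = x ↔ i = count p x :=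
  ⟨fun h' => h' ▸ (count_nth_of_lt_count h).symm, fun h' => h' ▸ nth_count hx⟩

lemma count_add_count_pos_and_not (h0 : ¬p 0) (m : ℕ) :
    count p (m + 1) + count (fun x => 0 < x ∧ ¬p x) (m + 1) = m := by
  induction m with
  | zero => simp [count_succ, h0]
  | succ m ih =>
    rw [count_succ p (m + 1), count_succ _ (m + 1)]
    by_cases hm : p (m + 1) <;> simp [hm] <;> omega

end Nat

lemma Set.ncard_inter_Icc_one_eq_count {S : Set ℕ} [DecidablePred (· ∈ S)] (h0 : 0 ∉ S)
    (j : ℕ) : (S ∩ Set.Icc 1 j).ncard = count (· ∈ S) (j + 1) := by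
  rw [count_eq_card_filter_range, ← Set.ncard_coe_finset]
  congr 1
  ext x
  simp only [Set.mem_inter_iff, Set.mem_Icc, mem_coe, mem_filter, Finset.mem_range]
  refine ⟨fun ⟨hx, _, hxj⟩ => ⟨by omega, hx⟩, fun ⟨hxj, hx⟩ => ⟨hx, ?_, by omega⟩⟩
  exact Nat.pos_of_ne_zero fun h => h0 (h ▸ hx)

lemma Finset.card_filter_add_one_mem_lt {L : Finset ℕ} (hL : L.Nonempty) :
    #{r ∈ L | r + 1 ∈ L} < #L :=
  card_lt_card <| filter_ssubset.2
    ⟨L.max' hL, L.max'_mem hL, fun h => by have := L.le_max' _ h; omega⟩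

lemma Finset.eq_image_range_of_add_three_le {N : ℕ} {P : Finset ℕ} (hP : P ⊆ Icc 2 (3 * N - 1))
    (hgap : ∀ i ∈ P, ∀ i' ∈ P, i < i' → i + 3 ≤ i') (hcard : N ≤ #P) :
    P = (range N).image (fun t => 3 * t + 2) := by
  induction N generalizing P with
  | zero => simpa using hP
  | succ N ih =>
    have hne : P.Nonempty := card_pos.1 (by omega)
    set p := P.max' hne
    have hlt : ∀ i ∈ P.erase p, i + 3 ≤ p := fun i hi =>
      hgap i (mem_of_mem_erase hi) p (P.max'_mem hne)
        ((P.le_max' i (mem_of_mem_erase hi)).lt_of_ne (ne_of_mem_erase hi))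
    have hrest : P.erase p = (range N).image (fun t => 3 * t + 2) := by
      refine ih (fun i hi => ?_) (fun i hi i' hi' => hgap i (mem_of_mem_erase hi) i'
        (mem_of_mem_erase hi')) (by rw [card_erase_of_mem (P.max'_mem hne)]; omega)
      have := mem_Icc.1 (hP (mem_of_mem_erase hi))
      have := mem_Icc.1 (hP (P.max'_mem hne))
      have := hlt i hi
      exact mem_Icc.2 ⟨by omega, by omega⟩
    have hp : p = 3 * N + 2 := by
      have := mem_Icc.1 (hP (P.max'_mem hne))
      rcases Nat.eq_zero_or_pos N with rfl | hN
      · omega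
      · have := hlt (3 * (N - 1) + 2) (hrest ▸ mem_image_of_mem _ (mem_range.2 (by omega)))
        omega
    rw [← insert_erase (P.max'_mem hne), hrest, range_add_one, image_insert, ← hp]

lemma card_filter_Icc_eq_of_plateaus (w : ℕ → ℕ) (x : ℕ) {N : ℕ}
    (hw : ∀ t < N, w (3 * t + 3) = w (3 * t + 2)) :
    #{i ∈ Icc 1 (3 * N + 1) | w i = x} =
      2 * #{t ∈ range N | w (3 * t + 2) = x} + #{r ∈ range (N + 1) | w (3 * r + 1) = x} := by
  induction N with
  | zero =>
    simp only [card_filter, Nat.mul_zero, zero_add, Icc_self, range_one, sum_singleton,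
      range_zero, sum_empty]
  | succ N ih =>
    simp only [card_filter] at ih ⊢
    rw [show 3 * (N + 1) + 1 = 3 * N + 1 + 1 + 1 + 1 by ring, sum_Icc_succ_top (by omega),
      sum_Icc_succ_top (by omega), sum_Icc_succ_top (by omega), sum_range_succ, sum_range_succ,
      ih fun t ht => hw t (by omega), show 3 * N + 1 + 1 + 1 = 3 * N + 3 by ring,
      hw N (by omega), show 3 * (N + 1) + 1 = 3 * N + 1 + 1 + 1 + 1 by ring]
    ring

lemma Nat.mul_le_two_mul_sub_one_mul_sub_iff {k b j : ℕ} (hk : 1 ≤ k) (hj : 1 ≤ j)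
    (hbj : b ≤ j) (hjb : j ≤ b + k) : k * b ≤ (2 * k - 1) * (j - b) ↔ 3 * b < 2 * j := by
  obtain ⟨g, rfl⟩ := Nat.exists_eq_add_of_le hbj
  obtain ⟨k, rfl⟩ := Nat.exists_eq_add_of_le hk
  rw [Nat.add_sub_cancel_left, show 2 * (1 + k) - 1 = 2 * k + 1 by omega]
  constructor <;> intro h <;> nlinarith

def IsBallot (n : ℕ) (S : Set ℕ) : Prop :=
  ∀ j, 1 ≤ j → j ≤ n → 3 * (S ∩ Set.Icc 1 j).ncard < 2 * j

/-- As the slope `(2k-1)/k` lies in `[2 - 1/k, 2)`, a lattice point `(γ, β)` with `0 < γ ≤ k` lies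
weakly below the line iff `β < 2γ`, i.e. `3β < 2(β + γ)`. -/
lemma isDyckNorthSet_iff_isBallot {k : ℕ} (hk : 1 ≤ k) {S : Set ℕ}
    (hS : S ⊆ Set.Icc 1 (3 * k - 1)) (hcard : S.ncard = 2 * k - 1) :
    IsDyckNorthSet k S ↔ IsBallot (3 * k - 1) S := by
  classical
  have h0 : 0 ∉ S := fun h => by simpa using (hS h).1
  have htotal : count (· ∈ S) (3 * k - 1 + 1) = 2 * k - 1 := by
    rw [← Set.ncard_inter_Icc_one_eq_count h0, Set.inter_eq_left.2 hS, hcard]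
  have hstep : ∀ j, 1 ≤ j → j ≤ 3 * k - 1 →
      (k * count (· ∈ S) (j + 1) ≤ (2 * k - 1) * (j - count (· ∈ S) (j + 1)) ↔
        3 * count (· ∈ S) (j + 1) < 2 * j) := by
    intro j hj hjn
    have hle : count (· ∈ S) (j + 1) ≤ j := by
      rw [count_succ', if_neg h0]
      exact count_le _
    have hrest : 2 * k - 1 ≤ count (· ∈ S) (j + 1) + (3 * k - 1 - j) := by
      rw [← htotal, show 3 * k - 1 + 1 = j + 1 + (3 * k - 1 - j) by omega, count_add]
      exact Nat.add_le_add_left (count_le _) _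
    exact Nat.mul_le_two_mul_sub_one_mul_sub_iff hk hj hle (by omega)
  simp only [IsDyckNorthSet, IsBallot, hS, hcard, true_and, Set.ncard_inter_Icc_one_eq_count h0]
  refine ⟨fun h j hj hjn => (hstep j hj hjn).1 (h j hjn), fun h j hjn => ?_⟩
  rcases Nat.eq_zero_or_pos j with rfl | hj
  · simp [count_succ, h0]
  · exact (hstep j hj hjn).2 (h j hj hjn)

def mesaPositions (n : ℕ) (w : ℕ → ℕ) : Finset ℕ :=
  {i ∈ Icc 2 (2 * n - 2) | w (i - 1) < w i ∧ w i = w (i + 1) ∧ w (i + 2) < w i}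

lemma mesaSet_eq_image_mesaPositions (n : ℕ) (w : ℕ → ℕ) :
    MesaSet n w = w '' mesaPositions n w := by
  ext m
  simp only [MesaSet, mesaPositions, coe_filter, mem_Icc, Set.mem_image, Set.mem_ofPred_eq]
  constructor
  · rintro ⟨i, h2, hn, ha, hb, hc, rfl⟩
    exact ⟨i, ⟨⟨h2, by omega⟩, ha, hb, hc⟩, rfl⟩
  · rintro ⟨i, ⟨⟨h2, hn⟩, ha, hb, hc⟩, rfl⟩
    exact ⟨i, h2, by omega, ha, hb, hc, rfl⟩

lemma add_three_le_of_mem_mesaPositions {n : ℕ} {w : ℕ → ℕ} {i i' : ℕ}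
    (hi : i ∈ mesaPositions n w) (hi' : i' ∈ mesaPositions n w) (h : i < i') : i + 3 ≤ i' := by
  simp only [mesaPositions, mem_filter, mem_Icc] at hi hi'
  obtain ⟨_, -, hplateau, hdescent⟩ := hi
  obtain ⟨_, hascent, -, -⟩ := hi'
  by_contra! hlt
  obtain rfl | rfl : i' = i + 1 ∨ i' = i + 2 := by omega
  · simp only [Nat.add_sub_cancel] at hascent
    omega
  · rw [show i + 2 - 1 = i + 1 by omega] at hascent
    omega

namespace IsStirling

variable {n N : ℕ} {w : ℕ → ℕ}

lemma apply_mem_Icc (hw : IsStirling n w) {i : ℕ} (hi1 : 1 ≤ i) (hin : i ≤ 2 * n) :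
    w i ∈ Set.Icc 1 n :=
  hw.2.1 i hi1 hin

lemma mesaSet_subset (hw : IsStirling n w) : MesaSet n w ⊆ Set.Icc 1 n := by
  rintro _ ⟨i, h2, hn, -, -, -, rfl⟩
  exact hw.apply_mem_Icc (by omega) (by omega)

lemma one_notMem_mesaSet (hw : IsStirling n w) : 1 ∉ MesaSet n w := by
  rintro ⟨i, h2, hn, hascent, -, -, hi⟩
  have := (hw.apply_mem_Icc (i := i - 1) (by omega) (by omega)).1
  omega

end IsStirling

section MaximalMesaSet

variable {n N : ℕ} {w : ℕ → ℕ}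

lemma mesaPositions_eq_image_range (hlen : 2 * n = 3 * N + 1)
    (hM : N ≤ (MesaSet n w).ncard) :
    mesaPositions n w = (range N).image (fun t => 3 * t + 2) := by
  refine eq_image_range_of_add_three_le (fun i hi => ?_)
    (fun i hi i' hi' => add_three_le_of_mem_mesaPositions hi hi') ?_
  · have := mem_Icc.1 (mem_filter.1 hi).1
    exact mem_Icc.2 ⟨this.1, by omega⟩
  · calc N ≤ (MesaSet n w).ncard := hM
      _ = (w '' mesaPositions n w).ncard := by rw [mesaSet_eq_image_mesaPositions]
      _ ≤ (mesaPositions n w : Set ℕ).ncard := Set.ncard_image_le (finite_toSet _)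
      _ = #(mesaPositions n w) := Set.ncard_coe_finset _

lemma mesa_at_three_mul_add_two (hlen : 2 * n = 3 * N + 1) (hM : N ≤ (MesaSet n w).ncard)
    {t : ℕ} (ht : t < N) :
    w (3 * t + 1) < w (3 * t + 2) ∧ w (3 * t + 3) = w (3 * t + 2) ∧
      w (3 * t + 4) < w (3 * t + 2) := by
  have h := mesaPositions_eq_image_range hlen hM ▸
    mem_image_of_mem (fun t => 3 * t + 2) (mem_range.2 ht)
  obtain ⟨-, hascent, hplateau, hdescent⟩ := mem_filter.1 h
  exact ⟨hascent, hplateau.symm, hdescent⟩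

lemma mesaSet_eq_image_range (hlen : 2 * n = 3 * N + 1) (hM : N ≤ (MesaSet n w).ncard) :
    MesaSet n w = ↑((range N).image fun t => w (3 * t + 2)) := by
  rw [mesaSet_eq_image_mesaPositions, mesaPositions_eq_image_range hlen hM, coe_image, coe_image,
    ← Set.image_comp]
  rfl

namespace IsStirling

lemma two_mul_card_mesas_add_card_valleys (hw : IsStirling n w) (hlen : 2 * n = 3 * N + 1)
    (hM : N ≤ (MesaSet n w).ncard) {x : ℕ} (hx1 : 1 ≤ x) (hxn : x ≤ n) :
    2 * #{t ∈ range N | w (3 * t + 2) = x} + #{r ∈ range (N + 1) | w (3 * r + 1) = x} = 2 := by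
  rw [← card_filter_Icc_eq_of_plateaus w x fun t ht =>
    (mesa_at_three_mul_add_two hlen hM ht).2.1, ← hlen]
  exact hw.1 x hx1 hxn

lemma valley_notMem_mesaSet (hw : IsStirling n w) (hlen : 2 * n = 3 * N + 1)
    (hM : N ≤ (MesaSet n w).ncard) {r : ℕ} (hr : r ≤ N) : w (3 * r + 1) ∉ MesaSet n w := by
  intro h
  obtain ⟨t, ht, hmesa_eq⟩ : ∃ t < N, w (3 * t + 2) = w (3 * r + 1) := by
    simpa [mesaSet_eq_image_range hlen hM] using h
  have hx := hw.apply_mem_Icc (i := 3 * r + 1) (by omega) (by omega)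
  have hcount := hw.two_mul_card_mesas_add_card_valleys hlen hM hx.1 hx.2
  have hmesa : 0 < #{t ∈ range N | w (3 * t + 2) = w (3 * r + 1)} :=
    card_pos.2 ⟨t, by simp [ht, hmesa_eq]⟩
  have hvalley : 0 < #{r' ∈ range (N + 1) | w (3 * r' + 1) = w (3 * r + 1)} :=
    card_pos.2 ⟨r, by simp; omega⟩
  omega

lemma card_valleys_eq_two (hw : IsStirling n w) (hlen : 2 * n = 3 * N + 1)
    (hM : N ≤ (MesaSet n w).ncard) {x : ℕ} (hx1 : 1 ≤ x) (hxn : x ≤ n)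
    (hx : x ∉ MesaSet n w) : #{r ∈ range (N + 1) | w (3 * r + 1) = x} = 2 := by
  have hcount := hw.two_mul_card_mesas_add_card_valleys hlen hM hx1 hxn
  rw [filter_eq_empty_iff.2 fun t ht h => hx ?_, card_empty] at hcount
  · omega
  · rw [mesaSet_eq_image_range hlen hM, coe_image]
    exact ⟨t, ht, h⟩

lemma card_low_valleys [DecidablePred (· ∈ MesaSet n w)] (hw : IsStirling n w)
    (hlen : 2 * n = 3 * N + 1) (hM : N ≤ (MesaSet n w).ncard) {j : ℕ} (hjn : j ≤ n) :
    #{r ∈ range (N + 1) | w (3 * r + 1) ≤ j} =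
      2 * count (fun x => 0 < x ∧ x ∉ MesaSet n w) (j + 1) := by
  rw [count_eq_card_filter_range, card_eq_sum_card_fiberwise (f := fun r => w (3 * r + 1))
    (t := {x ∈ range (j + 1) | 0 < x ∧ x ∉ MesaSet n w}), sum_const_nat, mul_comm]
  · intro x hx
    obtain ⟨hxj, hx0, hxM⟩ := by simpa using hx
    rw [filter_filter, ← hw.card_valleys_eq_two hlen hM hx0 (by omega) hxM]
    congr 1
    exact filter_congr fun r _ => ⟨fun h => h.2, fun h => ⟨by omega, h⟩⟩
  · intro r hr
    obtain ⟨hr, hrj⟩ := by simpa using hr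
    have := hw.apply_mem_Icc (i := 3 * r + 1) (by omega) (by omega)
    simp only [mem_coe, mem_filter, Finset.mem_range]
    exact ⟨by omega, this.1, hw.valley_notMem_mesaSet hlen hM (by omega)⟩

lemma isBallot_mesaSet (hw : IsStirling n w) (hlen : 2 * n = 3 * N + 1)
    (hM : N ≤ (MesaSet n w).ncard) : IsBallot n (MesaSet n w) := by
  classical
  intro j hj hjn
  have h0 : 0 ∉ MesaSet n w := fun h => by simpa using (hw.mesaSet_subset h).1
  set L := {r ∈ range (N + 1) | w (3 * r + 1) ≤ j}
  have hmesas : count (· ∈ MesaSet n w) (j + 1) ≤ #{t ∈ range N | w (3 * t + 2) ≤ j} := by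
    rw [count_eq_card_filter_range]
    refine (card_le_card fun x hx => ?_).trans (card_image_le (f := fun t => w (3 * t + 2)))
    obtain ⟨hxj, hxM⟩ := by simpa using hx
    obtain ⟨t, ht, rfl⟩ : ∃ t < N, w (3 * t + 2) = x := by
      simpa [mesaSet_eq_image_range hlen hM] using hxM
    simp only [mem_image, mem_filter, Finset.mem_range]
    exact ⟨t, ⟨ht, by omega⟩, rfl⟩
  -- a mesa of height `≤ j` sits between two valleys of height `< j`
  have hslots : {t ∈ range N | w (3 * t + 2) ≤ j} ⊆ {r ∈ L | r + 1 ∈ L} := by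
    intro t ht
    obtain ⟨ht, htj⟩ := by simpa using ht
    have := mesa_at_three_mul_add_two hlen hM ht
    simp only [L, mem_filter, Finset.mem_range, show 3 * (t + 1) + 1 = 3 * t + 4 by ring]
    omega
  have hLne : L.Nonempty := by
    have := hw.card_valleys_eq_two hlen hM (x := 1) le_rfl (by omega) hw.one_notMem_mesaSet
    obtain ⟨r, hr⟩ := card_pos.1 (by omega : 0 < #{r ∈ range (N + 1) | w (3 * r + 1) = 1})
    exact ⟨r, mem_filter.2 ⟨(mem_filter.1 hr).1, (mem_filter.1 hr).2.trans_le hj⟩⟩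
  have hL : #L = 2 * count (fun x => 0 < x ∧ x ∉ MesaSet n w) (j + 1) :=
    hw.card_low_valleys hlen hM hjn
  have hsplit := count_add_count_pos_and_not (p := (· ∈ MesaSet n w)) h0 j
  have := card_filter_add_one_mem_lt hLne
  have := card_le_card hslots
  rw [Set.ncard_inter_Icc_one_eq_count h0]
  omega

end IsStirling

end MaximalMesaSet

/-- With `s₀ < s₁ < ⋯` the elements of `S` and `c₀ < c₁ < ⋯` the positive integers outside `S`,
this is the word `c₀ s₀ s₀ c₀ s₁ s₁ c₁ s₂ s₂ c₁ s₃ s₃ c₂ ⋯` read from position `1`: position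
`3r+1` carries the valley `c_{r/2}` and positions `3t+2, 3t+3` carry the mesa `s_t`. -/
noncomputable def mesaWord (S : Set ℕ) (i : ℕ) : ℕ :=
  if i % 3 = 1 then nth (fun x => 0 < x ∧ x ∉ S) (i / 6) else nth (· ∈ S) ((i - 2) / 3)

lemma mesaWord_three_mul_add_one (S : Set ℕ) (r : ℕ) :
    mesaWord S (3 * r + 1) = nth (fun x => 0 < x ∧ x ∉ S) (r / 2) := by
  rw [mesaWord, if_pos (by omega)]
  congr 1
  omega

lemma mesaWord_three_mul_add_two (S : Set ℕ) (t : ℕ) :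
    mesaWord S (3 * t + 2) = nth (· ∈ S) t := by
  rw [mesaWord, if_neg (by omega)]
  congr 1
  omega

lemma mesaWord_three_mul_add_three (S : Set ℕ) (t : ℕ) :
    mesaWord S (3 * t + 3) = nth (· ∈ S) t := by
  rw [mesaWord, if_neg (by omega)]
  congr 1
  omega

section MesaWord

variable {n N : ℕ} {S : Set ℕ} [DecidablePred (· ∈ S)]

lemma count_pos_and_notMem_eq (hS : S ⊆ Set.Icc 1 n) (hcard : count (· ∈ S) (n + 1) = N) :
    count (fun x => 0 < x ∧ x ∉ S) (n + 1) = n - N := by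
  have := count_add_count_pos_and_not (p := (· ∈ S)) (fun h => by simpa using (hS h).1) n
  omega

lemma mesaWord_mem_and_count (hlen : 2 * n = 3 * N + 1) (hcard : count (· ∈ S) (n + 1) = N)
    {i : ℕ} (hi : i % 3 ≠ 1) (hin : i ≤ 2 * n) :
    mesaWord S i ∈ S ∧ count (· ∈ S) (mesaWord S i) = (i - 2) / 3 := by
  have hlt : (i - 2) / 3 < count (· ∈ S) (n + 1) := by omega
  rw [mesaWord, if_neg hi]
  exact ⟨nth_mem_of_lt_count hlt, count_nth_of_lt_count hlt⟩

lemma mesaWord_mem_compl_and_count (hlen : 2 * n = 3 * N + 1) (hS : S ⊆ Set.Icc 1 n)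
    (hcard : count (· ∈ S) (n + 1) = N) {i : ℕ} (hi : i % 3 = 1) (hin : i ≤ 2 * n) :
    (0 < mesaWord S i ∧ mesaWord S i ∉ S) ∧ mesaWord S i ≤ n ∧
      count (fun x => 0 < x ∧ x ∉ S) (mesaWord S i) = i / 6 := by
  have hlt : i / 6 < count (fun x => 0 < x ∧ x ∉ S) (n + 1) := by
    rw [count_pos_and_notMem_eq hS hcard]
    omega
  rw [mesaWord, if_pos hi]
  exact ⟨nth_mem_of_lt_count hlt, Nat.lt_succ_iff.1 (nth_lt_of_lt_count hlt),
    count_nth_of_lt_count hlt⟩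

-- the ballot condition at the north step `s_t`, preceded by `t` north steps
lemma lt_count_compl_nth_of_isBallot (hS : S ⊆ Set.Icc 1 n) (hcard : count (· ∈ S) (n + 1) = N)
    (hball : IsBallot n S) {t : ℕ} (ht : t < N) :
    (t + 1) / 2 < count (fun x => 0 < x ∧ x ∉ S) (nth (· ∈ S) t) := by
  have h0 : 0 ∉ S := fun h => by simpa using (hS h).1
  have hlt : t < count (· ∈ S) (n + 1) := hcard ▸ ht
  have hmem := nth_mem_of_lt_count hlt
  have hcount := count_nth_of_lt_count hlt
  obtain ⟨hs1, hsn⟩ := hS hmem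
  have hb := hball _ hs1 hsn
  rw [Set.ncard_inter_Icc_one_eq_count h0, count_succ, if_pos hmem, hcount] at hb
  have hsplit := count_add_count_pos_and_not (p := (· ∈ S)) h0 (nth (· ∈ S) t - 1)
  rw [Nat.sub_add_cancel hs1, hcount] at hsplit
  omega

lemma mesaWord_valley_lt_mesa (hS : S ⊆ Set.Icc 1 n) (hcard : count (· ∈ S) (n + 1) = N)
    (hball : IsBallot n S) {t : ℕ} (ht : t < N) :
    mesaWord S (3 * t + 1) < mesaWord S (3 * t + 2) ∧
      mesaWord S (3 * t + 4) < mesaWord S (3 * t + 2) := by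
  have hkey := lt_count_compl_nth_of_isBallot hS hcard hball ht
  rw [show 3 * t + 4 = 3 * (t + 1) + 1 by ring, mesaWord_three_mul_add_one,
    mesaWord_three_mul_add_one, mesaWord_three_mul_add_two]
  exact ⟨nth_lt_of_lt_count (by omega), nth_lt_of_lt_count hkey⟩

lemma card_filter_mesaWord_eq_two (hlen : 2 * n = 3 * N + 1) (hS : S ⊆ Set.Icc 1 n)
    (hcard : count (· ∈ S) (n + 1) = N) {x : ℕ} (hx1 : 1 ≤ x) (hxn : x ≤ n) :
    #{i ∈ Icc 1 (2 * n) | mesaWord S i = x} = 2 := by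
  have hC := count_pos_and_notMem_eq hS hcard
  rw [hlen, card_filter_Icc_eq_of_plateaus _ x fun t _ => by
    rw [mesaWord_three_mul_add_three, mesaWord_three_mul_add_two]]
  simp only [mesaWord_three_mul_add_two, mesaWord_three_mul_add_one]
  by_cases hx : x ∈ S
  · have hmesa : {t ∈ range N | nth (· ∈ S) t = x} = {count (· ∈ S) x} := by
      ext t
      simp only [mem_filter, Finset.mem_range, mem_singleton]
      refine ⟨fun ⟨ht, h⟩ => (nth_eq_iff_eq_count (hcard ▸ ht) hx).1 h, ?_⟩
      rintro rfl
      exact ⟨hcard ▸ count_strict_mono hx (by omega), nth_count hx⟩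
    have hvalley : {r ∈ range (N + 1) | nth (fun x => 0 < x ∧ x ∉ S) (r / 2) = x} = ∅ :=
      filter_eq_empty_iff.2 fun r hr h =>
        (nth_mem_of_lt_count (p := fun x => 0 < x ∧ x ∉ S) (m := n + 1)
          (by have := Finset.mem_range.1 hr; omega)).2 (h ▸ hx)
    rw [hmesa, hvalley]
    rfl
  · have hxC : 0 < x ∧ x ∉ S := ⟨hx1, hx⟩
    have hlt := count_strict_mono (p := fun x => 0 < x ∧ x ∉ S) hxC (show x < n + 1 by omega)
    have hmesa : {t ∈ range N | nth (· ∈ S) t = x} = ∅ :=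
      filter_eq_empty_iff.2 fun t ht h => hx (h ▸ nth_mem_of_lt_count (hcard ▸ mem_range.1 ht))
    have hvalley : {r ∈ range (N + 1) | nth (fun x => 0 < x ∧ x ∉ S) (r / 2) = x} =
        {2 * count (fun x => 0 < x ∧ x ∉ S) x, 2 * count (fun x => 0 < x ∧ x ∉ S) x + 1} := by
      ext r
      simp only [mem_filter, Finset.mem_range, mem_insert, mem_singleton]
      constructor
      · rintro ⟨hr, h⟩
        have := (nth_eq_iff_eq_count (m := n + 1) (by omega) hxC).1 h
        omega
      · intro hr
        exact ⟨by omega, (nth_eq_iff_eq_count (m := n + 1) (by omega) hxC).2 (by omega)⟩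
    rw [hmesa, hvalley, card_insert_of_notMem (by simp), card_singleton]
    rfl

lemma mesaWord_lt_of_eq (hlen : 2 * n = 3 * N + 1) (hS : S ⊆ Set.Icc 1 n)
    (hcard : count (· ∈ S) (n + 1) = N) (hball : IsBallot n S) {a j l : ℕ} (ha : 1 ≤ a)
    (haj : a < j) (hjl : j < l) (hl : l ≤ 2 * n) (h : mesaWord S a = mesaWord S l) :
    mesaWord S a < mesaWord S j := by
  by_cases ha3 : a % 3 = 1 <;> by_cases hl3 : l % 3 = 1
  · have hidx := (mesaWord_mem_compl_and_count hlen hS hcard ha3 (by omega)).2.2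
    rw [h, (mesaWord_mem_compl_and_count hlen hS hcard hl3 hl).2.2] at hidx
    -- the two copies of a valley letter sit at `6i+1` and `6i+4`, around the mesa `s_{2i}`
    obtain ⟨i, rfl⟩ : ∃ i, a = 3 * (2 * i) + 1 := ⟨a / 6, by omega⟩
    have hmesa := (mesaWord_valley_lt_mesa hS hcard hball (t := 2 * i) (by omega)).1
    obtain rfl | rfl : j = 3 * (2 * i) + 2 ∨ j = 3 * (2 * i) + 3 := by omega
    · exact hmesa
    · rwa [mesaWord_three_mul_add_three, ← mesaWord_three_mul_add_two]
  · exact absurd (h ▸ (mesaWord_mem_and_count hlen hcard hl3 hl).1)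
      (mesaWord_mem_compl_and_count hlen hS hcard ha3 (by omega)).1.2
  · exact absurd (h ▸ (mesaWord_mem_and_count hlen hcard ha3 (by omega)).1)
      (mesaWord_mem_compl_and_count hlen hS hcard hl3 hl).1.2
  · have hidx := (mesaWord_mem_and_count hlen hcard ha3 (by omega)).2
    rw [h, (mesaWord_mem_and_count hlen hcard hl3 hl).2] at hidx
    omega

lemma isStirling_mesaWord (hlen : 2 * n = 3 * N + 1) (hS : S ⊆ Set.Icc 1 n)
    (hcard : count (· ∈ S) (n + 1) = N) (hball : IsBallot n S) : IsStirling n (mesaWord S) := by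
  refine ⟨fun x hx1 hxn => card_filter_mesaWord_eq_two hlen hS hcard hx1 hxn,
    fun i hi1 hin => ?_, fun a j l ha haj hjl hl h => mesaWord_lt_of_eq hlen hS hcard hball ha
      haj hjl hl h⟩
  by_cases hi : i % 3 = 1
  · obtain ⟨⟨hpos, -⟩, hle, -⟩ := mesaWord_mem_compl_and_count hlen hS hcard hi hin
    exact ⟨hpos, hle⟩
  · exact hS (mesaWord_mem_and_count hlen hcard hi hin).1

lemma mesaSet_mesaWord (hlen : 2 * n = 3 * N + 1) (hS : S ⊆ Set.Icc 1 n)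
    (hcard : count (· ∈ S) (n + 1) = N) (hball : IsBallot n S) : MesaSet n (mesaWord S) = S := by
  ext x
  constructor
  · rintro ⟨i, h2, hn, -, hplateau, -, rfl⟩
    by_cases hi : i % 3 = 1
    · exact absurd (hplateau ▸ (mesaWord_mem_and_count hlen hcard (i := i + 1) (by omega)
        (by omega)).1) (mesaWord_mem_compl_and_count hlen hS hcard hi (by omega)).1.2
    · exact (mesaWord_mem_and_count hlen hcard hi (by omega)).1
  · intro hx
    have ht : count (· ∈ S) x < N := hcard ▸ count_strict_mono hx (by have := (hS hx).2; omega)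
    have hmesa := mesaWord_valley_lt_mesa hS hcard hball ht
    refine ⟨3 * count (· ∈ S) x + 2, by omega, by omega, ?_, ?_, ?_, ?_⟩
    · simpa using hmesa.1
    · rw [mesaWord_three_mul_add_three]
      exact mesaWord_three_mul_add_two S _
    · simpa [show 3 * count (· ∈ S) x + 2 + 2 = 3 * count (· ∈ S) x + 4 by ring] using hmesa.2
    · rw [mesaWord_three_mul_add_two, nth_count hx]

end MesaWord

lemma mem_AMS_of_isBallot {n N : ℕ} {S : Set ℕ} (hlen : 2 * n = 3 * N + 1)
    (hS : S ⊆ Set.Icc 1 n) (hcard : S.ncard = N) (hball : IsBallot n S) : S ∈ AMS n := by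
  classical
  have hcount : count (· ∈ S) (n + 1) = N := by
    rw [← Set.ncard_inter_Icc_one_eq_count (fun h => by simpa using (hS h).1),
      Set.inter_eq_left.2 hS, hcard]
  exact ⟨mesaWord S, isStirling_mesaWord hlen hS hcount hball,
    mesaSet_mesaWord hlen hS hcount hball⟩

theorem maximal_mesa_dyck_bijection (k : ℕ) (hk : 1 ≤ k) :
    Set.BijOn (fun M => M) {M | M ∈ AMS (3*k-1) ∧ M.ncard = 2*k - 1}
      {S | IsDyckNorthSet k S} := by
  have hlen : 2 * (3 * k - 1) = 3 * (2 * k - 1) + 1 := by omega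
  refine ⟨?_, fun _ _ _ _ h => h, fun S hS => ⟨S, ?_, rfl⟩⟩
  · rintro M ⟨⟨w, hw, rfl⟩, hcard⟩
    exact (isDyckNorthSet_iff_isBallot hk hw.mesaSet_subset hcard).2
      (hw.isBallot_mesaSet hlen hcard.ge)
  · obtain ⟨hsub, hcard, -⟩ := id hS
    exact ⟨mem_AMS_of_isBallot hlen hsub hcard
      ((isDyckNorthSet_iff_isBallot hk hsub hcard).1 hS), hcard⟩
end

section
/- The number of subsets M of {1,…,3k−1} of size 2k−1 satisfying |M ∩ [1,x]| ≤ (2x−1)/3 for all x ∈ M equals (1/k)·binom(3k−2, 2k−1), for every k ≥ 1. -/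
/-!
Read `M ⊆ [1, n]`, `n = 3k - 1`, as a lattice path of `n` steps: a down-step `-1` at each element
of `M` and an up-step `+2` elsewhere. The condition on `M` says that every nonempty prefix has
positive height, and a path with `|M| = 2k - 1` ends at height `2n - 3|M| = 1`. By the cycle lemma,
exactly one of the `n` cyclic rotations of a path of total height `1` has all prefixes positive,
and rotating `M` inside `ℤ/n` permutes the `(n choose 2k-1)` sets of the right size. So the count
is `(3k-1 choose 2k-1) / (3k-1) = (3k-2 choose 2k-1) / k`.
-/

open Finset

section CycleLemma

variable {n : ℕ}

def PrefixSumsPos (w : ZMod n → ℤ) (j : ZMod n) : Prop :=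
  ∀ t ∈ Icc 1 n, 0 < ∑ i ∈ range t, w (j + i)

instance (w : ZMod n → ℤ) (j : ZMod n) : Decidable (PrefixSumsPos w j) :=
  inferInstanceAs (Decidable (∀ t ∈ Icc 1 n, _))

variable [NeZero n]

lemma ZMod.sum_range_natCast {M : Type*} [AddCommMonoid M] (f : ZMod n → M) :
    ∑ i ∈ range n, f i = ∑ z, f z :=
  sum_nbij' (↑) ZMod.val (by simp) (by simp [ZMod.val_lt])
    (fun _ hi => ZMod.val_cast_of_lt (mem_range.1 hi)) (fun z _ => ZMod.natCast_zmod_val z)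
    (fun _ _ => rfl)

variable {w : ZMod n → ℤ}

lemma sum_range_add_of_sum_eq_one (hw : ∑ z, w z = 1) (m : ℕ) :
    ∑ i ∈ range (m + n), w i = ∑ i ∈ range m, w i + 1 := by
  rw [sum_range_add, ← hw, ← Equiv.sum_comp (Equiv.addLeft (m : ZMod n)),
    ← ZMod.sum_range_natCast]
  simp

lemma sum_range_add_eq_sub (j : ZMod n) (t : ℕ) :
    ∑ i ∈ range t, w (j + i) = ∑ i ∈ range (j.val + t), w i - ∑ i ∈ range j.val, w i := by
  simp [sum_range_add]

lemma prefixSumsPos_iff (j : ZMod n) : PrefixSumsPos w j ↔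
    ∀ t ∈ Icc 1 n, ∑ i ∈ range j.val, w i < ∑ i ∈ range (j.val + t), w i := by
  simp only [PrefixSumsPos, sum_range_add_eq_sub, sub_pos]

lemma PrefixSumsPos.eq (hw : ∑ z, w z = 1) {a b : ZMod n} (ha : PrefixSumsPos w a)
    (hb : PrefixSumsPos w b) : a = b := by
  wlog hab : a.val < b.val generalizing a b
  · rcases (not_lt.1 hab).lt_or_eq with h | h
    · exact (this hb ha h).symm
    · exact ZMod.val_injective n h.symm
  -- the partial sums `s` of `w` would satisfy `s a < s b < s (a + n) = s a + 1`
  have hbn := ZMod.val_lt b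
  rw [prefixSumsPos_iff] at ha hb
  have h₁ := ha (b.val - a.val) (mem_Icc.2 (by omega))
  have h₂ := hb (a.val + n - b.val) (mem_Icc.2 (by omega))
  rw [add_tsub_cancel_of_le hab.le] at h₁
  rw [show b.val + (a.val + n - b.val) = a.val + n by omega,
    sum_range_add_of_sum_eq_one hw] at h₂
  omega

lemma exists_prefixSumsPos (hw : ∑ z, w z = 1) : ∃ j, PrefixSumsPos w j := by
  set h : ℕ → ℤ := fun m => ∑ i ∈ range m, w i
  -- a minimum of `h` on `[0, n)`, ties broken towards the largest index
  obtain ⟨j, hj, hmin⟩ := exists_min_image (range n) (fun m => n * h m - m)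
    (nonempty_range_iff.2 (NeZero.ne n))
  have hjn := mem_range.1 hj
  refine ⟨j, (prefixSumsPos_iff _).2 ?_⟩
  rw [ZMod.val_cast_of_lt hjn]
  intro t ht
  rw [mem_Icc] at ht
  change h j < h (j + t)
  refine lt_of_mul_lt_mul_left ?_ (Int.natCast_nonneg n)
  by_cases hlt : j + t < n
  · have := hmin (j + t) (mem_range.2 hlt)
    push_cast at this
    linarith
  · have := hmin (j + t - n) (mem_range.2 (by omega))
    have hper : h (j + t) = h (j + t - n) + 1 := by
      rw [← sum_range_add_of_sum_eq_one hw, Nat.sub_add_cancel (by omega)]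
    have htn : (t : ℤ) ≤ n := by exact_mod_cast ht.2
    push_cast [Nat.cast_sub (show n ≤ j + t by omega)] at this
    rw [hper]
    linarith

theorem existsUnique_prefixSumsPos (hw : ∑ z, w z = 1) : ∃! j, PrefixSumsPos w j :=
  (exists_prefixSumsPos hw).elim fun j hj => ⟨j, hj, fun _ hi => hi.eq hw hj⟩

end CycleLemma

section Rotation

open Pointwise

variable {n : ℕ}

def stepWeight (S : Finset (ZMod n)) (z : ZMod n) : ℤ := if z ∈ S then -1 else 2

lemma stepWeight_add (S : Finset (ZMod n)) (j z : ZMod n) :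
    stepWeight S (j + z) = stepWeight (-j +ᵥ S) z := by
  simp [stepWeight, mem_neg_vadd_finset_iff]

lemma prefixSumsPos_stepWeight_iff (S : Finset (ZMod n)) (j : ZMod n) :
    PrefixSumsPos (stepWeight S) j ↔ PrefixSumsPos (stepWeight (-j +ᵥ S)) 0 := by
  simp only [PrefixSumsPos, stepWeight_add, zero_add]

variable [NeZero n]

lemma sum_stepWeight (S : Finset (ZMod n)) : ∑ z, stepWeight S z = 2 * n - 3 * #S := by
  have hS : #S ≤ n := by simpa [ZMod.card] using card_le_univ S
  simp [stepWeight, sum_ite, filter_notMem_eq_sdiff, card_univ_sdiff, ZMod.card]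
  omega

lemma card_filter_prefixSumsPos_stepWeight (c : ℕ) (j : ZMod n) :
    #{S ∈ powersetCard c univ | PrefixSumsPos (stepWeight S) j} =
      #{S ∈ powersetCard c (univ : Finset (ZMod n)) | PrefixSumsPos (stepWeight S) 0} := by
  refine card_nbij' (-j +ᵥ ·) (j +ᵥ ·) ?_ ?_ (fun S _ => vadd_neg_vadd ..)
    (fun S _ => neg_vadd_vadd ..)
  · intro S
    simp [prefixSumsPos_stepWeight_iff S j, card_vadd_finset]
  · intro S
    simp [prefixSumsPos_stepWeight_iff _ j, card_vadd_finset]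

lemma mul_card_filter_prefixSumsPos_stepWeight {c : ℕ} (h : 2 * n = 3 * c + 1) :
    n * #{S ∈ powersetCard c (univ : Finset (ZMod n)) | PrefixSumsPos (stepWeight S) 0} =
      n.choose c := by
  calc n * #{S ∈ powersetCard c (univ : Finset (ZMod n)) | PrefixSumsPos (stepWeight S) 0}
      = ∑ j : ZMod n, #{S ∈ powersetCard c univ | PrefixSumsPos (stepWeight S) j} := by
        simp [card_filter_prefixSumsPos_stepWeight, ZMod.card]
    _ = ∑ S ∈ powersetCard c univ, #{j | PrefixSumsPos (stepWeight S) j} :=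
        (sum_card_bipartiteAbove_eq_sum_card_bipartiteBelow _).symm
    _ = ∑ S ∈ powersetCard c (univ : Finset (ZMod n)), 1 := by
        refine sum_congr rfl fun S hS => card_eq_one_iff_existsUnique.2 ?_
        have hw : ∑ z, stepWeight S z = 1 := by
          rw [sum_stepWeight, (mem_powersetCard.1 hS).2]
          omega
        simpa using existsUnique_prefixSumsPos hw
    _ = n.choose c := by simp [ZMod.card]

end Rotation

lemma card_inter_Icc_add_one (M : Finset ℕ) (t : ℕ) :
    #(M ∩ Icc 1 (t + 1)) = #(M ∩ Icc 1 t) + if t + 1 ∈ M then 1 else 0 := by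
  rw [← insert_Icc_right_eq_Icc_add_one (by omega)]
  split_ifs with h
  · rw [inter_insert_of_mem h, card_insert_of_notMem (by simp)]
  · rw [inter_insert_of_notMem h, add_zero]

lemma sum_range_ite_add_one_mem (M : Finset ℕ) (t : ℕ) :
    ∑ i ∈ range t, (if i + 1 ∈ M then (-1 : ℤ) else 2) = 2 * t - 3 * #(M ∩ Icc 1 t) := by
  induction t with
  | zero => simp
  | succ t ih =>
    rw [sum_range_succ, ih, card_inter_Icc_add_one]
    split_ifs <;> push_cast <;> ring

lemma three_mul_card_inter_Icc_lt_of_forall_mem {M : Finset ℕ}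
    (hM : ∀ x ∈ M, 3 * #(M ∩ Icc 1 x) ≤ 2 * x - 1) (t : ℕ) (ht : 1 ≤ t) :
    3 * #(M ∩ Icc 1 t) < 2 * t := by
  induction t with
  | zero => omega
  | succ t ih =>
    by_cases h : t + 1 ∈ M
    · have := hM _ h
      omega
    · rw [card_inter_Icc_add_one, if_neg h]
      rcases t.eq_zero_or_pos with rfl | ht
      · simp
      · have := ih ht
        omega

section Embedding

variable {n : ℕ} [NeZero n]

def valSucc : ZMod n ↪ ℕ :=
  ⟨fun z => z.val + 1, fun a b h => ZMod.val_injective n (by simpa using h)⟩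

@[simp] lemma valSucc_apply (z : ZMod n) : valSucc z = z.val + 1 := rfl

lemma map_valSucc_univ : univ.map (valSucc : ZMod n ↪ ℕ) = Icc 1 n := by
  ext x
  simp only [mem_map, mem_univ, true_and, mem_Icc, valSucc_apply]
  constructor
  · rintro ⟨z, rfl⟩
    have := ZMod.val_lt z
    omega
  · rintro ⟨h₁, h₂⟩
    exact ⟨(x - 1 : ℕ), by rw [ZMod.val_cast_of_lt (by omega)]; omega⟩

lemma natCast_mem_iff_add_one_mem_map_valSucc {S : Finset (ZMod n)} {i : ℕ} (hi : i < n) :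
    (i : ZMod n) ∈ S ↔ i + 1 ∈ S.map valSucc := by
  simp only [mem_map, valSucc_apply, add_left_inj]
  constructor
  · exact fun h => ⟨i, h, ZMod.val_cast_of_lt hi⟩
  · rintro ⟨z, hz, rfl⟩
    simpa using hz

lemma prefixSumsPos_stepWeight_zero_iff (S : Finset (ZMod n)) :
    PrefixSumsPos (stepWeight S) 0 ↔
      ∀ x ∈ S.map valSucc, 3 * #(S.map valSucc ∩ Icc 1 x) ≤ 2 * x - 1 := by
  have hsum (t : ℕ) (ht : t ≤ n) :
      ∑ i ∈ range t, stepWeight S (0 + i) = 2 * t - 3 * #(S.map valSucc ∩ Icc 1 t) := by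
    rw [← sum_range_ite_add_one_mem]
    refine sum_congr rfl fun i hi => ?_
    rw [zero_add, stepWeight]
    exact if_congr (natCast_mem_iff_add_one_mem_map_valSucc (by simp at hi; omega)) rfl rfl
  constructor
  · intro h x hx
    have hx' : x ∈ Icc 1 n := by
      rw [← map_valSucc_univ]
      exact map_subset_map.2 (subset_univ S) hx
    have := h x hx'
    rw [hsum x (mem_Icc.1 hx').2] at this
    omega
  · intro h t ht
    rw [hsum t (mem_Icc.1 ht).2]
    have := three_mul_card_inter_Icc_lt_of_forall_mem h t (mem_Icc.1 ht).1
    omega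

end Embedding

theorem count_maximal_sets_combinatorial (k : ℕ) (hk : 1 ≤ k) :
    ((Finset.Icc 1 (3*k-1)).powerset.filter
        (fun M => M.card = 2*k - 1 ∧
          ∀ x ∈ M, 3 * (M ∩ Finset.Icc 1 x).card ≤ 2*x - 1)).card =
      (3*k - 2).choose (2*k - 1) / k := by
  set n := 3 * k - 1
  set c := 2 * k - 1
  have : NeZero n := ⟨by omega⟩
  have hcount : #((Icc 1 n).powerset.filter
      (fun M => #M = c ∧ ∀ x ∈ M, 3 * #(M ∩ Icc 1 x) ≤ 2 * x - 1)) =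
        #{S ∈ powersetCard c (univ : Finset (ZMod n)) | PrefixSumsPos (stepWeight S) 0} := by
    rw [← filter_filter, ← powersetCard_eq_filter, ← map_valSucc_univ, powersetCard_map,
      filter_map, card_map]
    exact congrArg card (filter_congr fun S _ => (prefixSumsPos_stepWeight_zero_iff S).symm)
  have hmul := mul_card_filter_prefixSumsPos_stepWeight (n := n) (c := c) (by omega)
  have hchoose : (3 * k - 2).choose c * n = n.choose c * k := by
    have := Nat.choose_mul_succ_eq (3 * k - 2) c
    rwa [show 3 * k - 2 + 1 = n by omega, show n - c = k by omega] at this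
  rw [hcount]
  refine (Nat.div_eq_of_eq_mul_left (by omega)
    (Nat.eq_of_mul_eq_mul_right (NeZero.pos n) ?_)).symm
  rw [hchoose, ← hmul]
  ring
end
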